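/- Fix n ≥ 1, a finite type V, and s : Fin n → V, and let μ be the uniform probability measure on Equiv.Perm (Fin n). Let c₀ = max_{v ∈ V} |{x | s x = v}| (so c₀ ≥ 1), and let k ∈ ℕ with k + 1 ≤ n · |V|. Then the minimum, over all families (A, A₀, …, A_{k−1}) of k + 1 pairwise distinct atom events with μ(A) > 0, of the ratio μ(Aᶜ ∩ ⋂_{i<k} A_iᶜ) / μ(A), equals ( min over all families (B₀, …, B_k) of k + 1 pairwise distinct atom events of μ(⋂_{i≤k} B_iᶜ) ) · n / c₀. That is, the numerator can be minimized and the denominator simultaneously maximized: some family of k + 1 atoms minimizing μ(⋂ ¬B_i) contains an atom whose value is a most frequent sensitive value of the bucket, and taking that atom as A attains the minimum ratio. -/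

import Mathlib

open MeasureTheory ProbabilityTheory

noncomputable instance (n : ℕ) : MeasurableSpace (Equiv.Perm (Fin n)) := ⊤

/-- The atom event `A(p,v) = {π | s (π p) = v}` for person `p` and value `v`. -/
def atomEvent {n : ℕ} {V : Type*} (s : Fin n → V) (a : Fin n × V) :
    Set (Equiv.Perm (Fin n)) :=
  {π : Equiv.Perm (Fin n) | s (π a.1) = a.2}

section Helpers

open Finset

instance (n : ℕ) : MeasurableSingletonClass (Equiv.Perm (Fin n)) :=
  ⟨fun _ => MeasurableSpace.measurableSet_top⟩

lemma uniformOn_perm_eq {n : ℕ} (X : Set (Equiv.Perm (Fin n))) :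
    uniformOn Set.univ X
      = (X.ncard : ENNReal) / (Fintype.card (Equiv.Perm (Fin n))) := by
  rw [uniformOn_univ, Measure.count_apply_finite X X.toFinite,
    Set.ncard_eq_toFinset_card X X.toFinite]

lemma uniformOn_perm_mono {n : ℕ} {X Y : Set (Equiv.Perm (Fin n))} (h : X.ncard ≤ Y.ncard) :
    uniformOn Set.univ X ≤ uniformOn Set.univ Y := by
  rw [uniformOn_perm_eq, uniformOn_perm_eq]
  exact ENNReal.div_le_div (Nat.cast_le.2 h) le_rfl

lemma exists_perm_map_two {α : Type*} [DecidableEq α] {p p' t u : α}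
    (hp : p ≠ p') (ht : t ≠ u) : ∃ π : Equiv.Perm α, π p = t ∧ π p' = u := by
  classical
  set σ := Equiv.swap p t with hσ
  by_cases h : σ p' = u
  · exact ⟨σ, Equiv.swap_apply_left p t, h⟩
  · refine ⟨σ.trans (Equiv.swap u (σ p')), ?_, ?_⟩
    · simp only [Equiv.trans_apply, hσ, Equiv.swap_apply_left]
      rw [Equiv.swap_apply_of_ne_of_ne]
      · exact fun hc => ht hc
      · intro hc
        exact hp (σ.injective (by rw [← hc, Equiv.swap_apply_left]))
    · simp only [Equiv.trans_apply, Equiv.swap_apply_right]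

lemma iInter_comp_equiv {α : Type*} {ι ι' : Sort*} (e : ι ≃ ι') (F : ι' → Set α) :
    ⋂ i, F (e i) = ⋂ j, F j := by
  ext x
  simp only [Set.mem_iInter]
  exact ⟨fun h j => by simpa using h (e.symm j), fun h i => h _⟩

variable {n : ℕ} {V : Type*} [Fintype V] [DecidableEq V]

lemma fiber_card_eq (p : Fin n) (t : Fin n) :
    (univ.filter fun π : Equiv.Perm (Fin n) => π p = t).card
      = (univ.filter fun π : Equiv.Perm (Fin n) => π p = p).card := by
  classical
  refine Finset.card_bij' (fun π _ => Equiv.swap p t * π) (fun π _ => Equiv.swap p t * π)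
    ?_ ?_ ?_ ?_
  · intro π hπ
    simp only [mem_filter, mem_univ, true_and] at hπ ⊢
    rw [Equiv.Perm.mul_apply, hπ, Equiv.swap_apply_right]
  · intro π hπ
    simp only [mem_filter, mem_univ, true_and] at hπ ⊢
    rw [Equiv.Perm.mul_apply, hπ, Equiv.swap_apply_left]
  · intro π _
    show Equiv.swap p t * (Equiv.swap p t * π) = π
    rw [← mul_assoc, Equiv.swap_mul_self, one_mul]
  · intro π _
    show Equiv.swap p t * (Equiv.swap p t * π) = π
    rw [← mul_assoc, Equiv.swap_mul_self, one_mul]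

lemma card_perm_eq_mul (p : Fin n) :
    Fintype.card (Equiv.Perm (Fin n))
      = n * (univ.filter fun π : Equiv.Perm (Fin n) => π p = p).card := by
  classical
  have h1 : (univ : Finset (Equiv.Perm (Fin n))).card
      = ∑ t : Fin n, (univ.filter fun π : Equiv.Perm (Fin n) => π p = t).card :=
    Finset.card_eq_sum_card_fiberwise (fun π _ => mem_univ (π p))
  rw [← Fintype.card, Fintype.card] at *
  rw [h1, Finset.sum_congr rfl (fun t _ => fiber_card_eq p t), Finset.sum_const,
    Finset.card_univ, Fintype.card_fin, smul_eq_mul]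

omit [Fintype V] in
lemma atom_ncard (s : Fin n → V) (a : Fin n × V) :
    (atomEvent s a).ncard
      = (univ.filter fun x : Fin n => s x = a.2).card
        * (univ.filter fun π : Equiv.Perm (Fin n) => π a.1 = a.1).card := by
  classical
  have hset : atomEvent s a
      = ↑(univ.filter fun π : Equiv.Perm (Fin n) => s (π a.1) = a.2) := by
    ext π; simp [atomEvent]
  rw [hset, Set.ncard_coe_finset]
  have h1 : (univ.filter fun π : Equiv.Perm (Fin n) => s (π a.1) = a.2).card
      = ∑ t ∈ univ.filter (fun x : Fin n => s x = a.2),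
          ((univ.filter fun π : Equiv.Perm (Fin n) => s (π a.1) = a.2).filter
            (fun π => π a.1 = t)).card := by
    refine Finset.card_eq_sum_card_fiberwise ?_
    intro π hπ
    simp only [mem_filter, mem_univ, true_and] at hπ ⊢
    simpa using hπ
  rw [h1]
  have h2 : ∀ t ∈ univ.filter (fun x : Fin n => s x = a.2),
      ((univ.filter fun π : Equiv.Perm (Fin n) => s (π a.1) = a.2).filter
        (fun π => π a.1 = t)).card
      = (univ.filter fun π : Equiv.Perm (Fin n) => π a.1 = a.1).card := by
    intro t ht
    simp only [mem_filter, mem_univ, true_and] at ht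
    rw [Finset.filter_filter]
    have : (univ.filter fun π : Equiv.Perm (Fin n) => s (π a.1) = a.2 ∧ π a.1 = t)
        = univ.filter fun π : Equiv.Perm (Fin n) => π a.1 = t := by
      ext π
      simp only [mem_filter, mem_univ, true_and, and_iff_right_iff_imp]
      intro h; rw [h, ht]
    rw [this, fiber_card_eq]
  rw [Finset.sum_congr rfl h2, Finset.sum_const, smul_eq_mul]

omit [Fintype V] in
lemma atom_measure (s : Fin n → V) (a : Fin n × V) :
    uniformOn Set.univ (atomEvent s a)
      = ((univ.filter fun x : Fin n => s x = a.2).card : ENNReal) / (n : ENNReal) := by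
  classical
  set h := (univ.filter fun π : Equiv.Perm (Fin n) => π a.1 = a.1).card with hh
  have hM := card_perm_eq_mul (n := n) a.1
  have hh0 : h ≠ 0 := by
    intro h0
    have hpos := Fintype.card_pos (α := Equiv.Perm (Fin n))
    rw [← hh, h0, mul_zero] at hM
    omega
  rw [uniformOn_perm_eq, atom_ncard, hM, ← hh]
  push_cast
  rw [ENNReal.mul_div_mul_right _ _ (by exact_mod_cast hh0) (by simp)]

omit [Fintype V] in
lemma atom_ne (s : Fin n → V) {p p' : Fin n} (hp : p ≠ p') {w : V} {x y : Fin n}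
    (hx : s x = w) (hy : s y ≠ w) : atomEvent s (p, w) ≠ atomEvent s (p', w) := by
  have hxy : x ≠ y := fun h => hy (h ▸ hx)
  obtain ⟨π, hπ1, hπ2⟩ := exists_perm_map_two hp hxy
  intro hEq
  have h1 : π ∈ atomEvent s (p, w) := by simp [atomEvent, hπ1, hx]
  rw [hEq] at h1
  exact hy (by simpa [atomEvent, hπ2] using h1)

omit [Fintype V] in
lemma exists_good_perm (s : Fin n → V) {v vstar : V} (hne : v ≠ vstar)
    (hcard : (univ.filter fun x : Fin n => s x = v).card
      ≤ (univ.filter fun x : Fin n => s x = vstar).card) :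
    ∃ σ : Equiv.Perm (Fin n),
      (∀ y, s (σ y) = v → s y = vstar) ∧
      (∀ y w, w ≠ v → w ≠ vstar → s (σ y) = w → s y = w) := by
  classical
  set Fv := univ.filter fun x : Fin n => s x = v with hFv
  set Fs := univ.filter fun x : Fin n => s x = vstar with hFs
  obtain ⟨T, hTsub, hTcard⟩ := Finset.exists_subset_card_eq hcard
  have hTv : ∀ x, x ∈ T → s x = vstar := by
    intro x hx
    have := hTsub hx
    simp only [hFs, mem_filter] at this
    exact this.2
  have hFvv : ∀ x, x ∈ Fv ↔ s x = v := by intro x; simp [hFv]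
  have hdisj : ∀ x, x ∈ Fv → x ∉ T := by
    intro x hx hxT
    exact hne (((hFvv x).1 hx).symm.trans (hTv x hxT))
  have hce : Fintype.card ↥Fv = Fintype.card ↥T := by
    simp [Fintype.card_coe, hTcard]
  let e : ↥Fv ≃ ↥T := Fintype.equivOfCardEq hce
  let f : Fin n → Fin n := fun x =>
    if hx : x ∈ Fv then (e ⟨x, hx⟩ : Fin n)
    else if hx' : x ∈ T then (e.symm ⟨x, hx'⟩ : Fin n) else x
  have hf1 : ∀ x (hx : x ∈ Fv), f x = (e ⟨x, hx⟩ : Fin n) := by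
    intro x hx; simp only [f, dif_pos hx]
  have hf2 : ∀ x (hx : x ∈ T), f x = (e.symm ⟨x, hx⟩ : Fin n) := by
    intro x hx
    have hxv : x ∉ Fv := fun h => hdisj x h hx
    simp only [f, dif_neg hxv, dif_pos hx]
  have hf3 : ∀ x, x ∉ Fv → x ∉ T → f x = x := by
    intro x h1 h2; simp only [f, dif_neg h1, dif_neg h2]
  have hmemT : ∀ x (hx : x ∈ Fv), f x ∈ T := by
    intro x hx; rw [hf1 x hx]; exact (e ⟨x, hx⟩).2
  have hmemV : ∀ x (hx : x ∈ T), f x ∈ Fv := by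
    intro x hx; rw [hf2 x hx]; exact (e.symm ⟨x, hx⟩).2
  have hinj : Function.Injective f := by
    intro x y hxy
    by_cases hx : x ∈ Fv
    · by_cases hy : y ∈ Fv
      · rw [hf1 x hx, hf1 y hy] at hxy
        have := e.injective (Subtype.ext hxy)
        exact congrArg Subtype.val this
      · by_cases hy' : y ∈ T
        · exfalso
          have h1 := hmemT x hx
          have h2 := hmemV y hy'
          rw [hxy] at h1
          exact hdisj _ h2 h1
        · exfalso
          have h1 := hmemT x hx
          rw [hxy, hf3 y hy hy'] at h1
          exact hy' h1
    · by_cases hx' : x ∈ T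
      · by_cases hy : y ∈ Fv
        · exfalso
          have h1 := hmemV x hx'
          have h2 := hmemT y hy
          rw [hxy] at h1
          exact hdisj _ h1 h2
        · by_cases hy' : y ∈ T
          · rw [hf2 x hx', hf2 y hy'] at hxy
            have := e.symm.injective (Subtype.ext hxy)
            exact congrArg Subtype.val this
          · exfalso
            have h1 := hmemV x hx'
            rw [hxy, hf3 y hy hy'] at h1
            exact hy h1
      · by_cases hy : y ∈ Fv
        · exfalso
          have h1 := hmemT y hy
          rw [← hxy, hf3 x hx hx'] at h1
          exact hx' h1
        · by_cases hy' : y ∈ T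
          · exfalso
            have h1 := hmemV y hy'
            rw [← hxy, hf3 x hx hx'] at h1
            exact hx h1
          · rw [hf3 x hx hx', hf3 y hy hy'] at hxy
            exact hxy
  refine ⟨Equiv.ofBijective f (Finite.injective_iff_bijective.mp hinj), ?_, ?_⟩
  · intro y hy
    have hfy : s (f y) = v := hy
    by_cases h1 : y ∈ Fv
    · exfalso
      have := hTv _ (hmemT y h1)
      rw [this] at hfy
      exact hne hfy.symm
    · by_cases h2 : y ∈ T
      · exact hTv y h2
      · exfalso
        rw [hf3 y h1 h2] at hfy
        exact h1 ((hFvv y).2 hfy)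
  · intro y w hwv hws hy
    have hfy : s (f y) = w := hy
    by_cases h1 : y ∈ Fv
    · exfalso; rw [hTv _ (hmemT y h1)] at hfy; exact hws hfy.symm
    · by_cases h2 : y ∈ T
      · exfalso
        rw [(hFvv _).1 (hmemV y h2)] at hfy
        exact hwv hfy.symm
      · rw [hf3 y h1 h2] at hfy; exact hfy

end Helpers

/-- The numerator `μ(Aᶜ ∩ ⋂ i, A_iᶜ)` can be minimized and the denominator `μ(A)`
simultaneously maximized: the minimum over families of `k + 1` pairwise distinct atom
events with `μ(A) > 0` of the ratio `μ(Aᶜ ∩ ⋂ i, A_iᶜ)/μ(A)` equals the minimum over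
all families of `k + 1` pairwise distinct atom events of `μ(⋂ i, B_iᶜ)`, times `n / c₀`
where `c₀` is the frequency of a most frequent sensitive value of the bucket. -/
theorem min_ratio_eq_min_times_n_div_maxFreq
    (n : ℕ) (hn : 1 ≤ n) (V : Type*) [Fintype V] [DecidableEq V] (s : Fin n → V)
    (c₀ : ℕ)
    (hc₀ : c₀ = Finset.univ.sup
      (fun v : V => (Finset.univ.filter (fun x : Fin n => s x = v)).card))
    (k : ℕ) (hk : k + 1 ≤ n * Fintype.card V) :
    sInf { r : ENNReal | ∃ a : Fin (k + 1) → Fin n × V,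
        Function.Injective (fun i => atomEvent s (a i)) ∧
        0 < uniformOn (Set.univ : Set (Equiv.Perm (Fin n))) (atomEvent s (a 0)) ∧
        r = uniformOn (Set.univ : Set (Equiv.Perm (Fin n)))
              ((atomEvent s (a 0))ᶜ ∩ ⋂ i : Fin k, (atomEvent s (a i.succ))ᶜ)
            / uniformOn (Set.univ : Set (Equiv.Perm (Fin n))) (atomEvent s (a 0)) } =
    sInf { r : ENNReal | ∃ b : Fin (k + 1) → Fin n × V,
        Function.Injective (fun i => atomEvent s (b i)) ∧
        r = uniformOn (Set.univ : Set (Equiv.Perm (Fin n)))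
              (⋂ i : Fin (k + 1), (atomEvent s (b i))ᶜ) }
      * (n : ENNReal) / (c₀ : ENNReal) := by
  classical
  set L := { r : ENNReal | ∃ a : Fin (k + 1) → Fin n × V,
        Function.Injective (fun i => atomEvent s (a i)) ∧
        0 < uniformOn (Set.univ : Set (Equiv.Perm (Fin n))) (atomEvent s (a 0)) ∧
        r = uniformOn (Set.univ : Set (Equiv.Perm (Fin n)))
              ((atomEvent s (a 0))ᶜ ∩ ⋂ i : Fin k, (atomEvent s (a i.succ))ᶜ)
            / uniformOn (Set.univ : Set (Equiv.Perm (Fin n))) (atomEvent s (a 0)) } with hLdef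
  set R := { r : ENNReal | ∃ b : Fin (k + 1) → Fin n × V,
        Function.Injective (fun i => atomEvent s (b i)) ∧
        r = uniformOn (Set.univ : Set (Equiv.Perm (Fin n)))
              (⋂ i : Fin (k + 1), (atomEvent s (b i))ᶜ) } with hRdef
  have hVne : (Finset.univ : Finset V).Nonempty := ⟨s ⟨0, hn⟩, Finset.mem_univ _⟩
  obtain ⟨vstar, -, hvs⟩ := Finset.exists_mem_eq_sup (Finset.univ : Finset V) hVne
    (fun v : V => (Finset.univ.filter (fun x : Fin n => s x = v)).card)
  have hc0 : c₀ = (Finset.univ.filter (fun x : Fin n => s x = vstar)).card := by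
    rw [hc₀]; exact hvs
  have hcle : ∀ v : V, (Finset.univ.filter (fun x : Fin n => s x = v)).card ≤ c₀ := by
    intro v; rw [hc₀]
    exact Finset.le_sup (f := fun v : V => (Finset.univ.filter (fun x : Fin n => s x = v)).card) (Finset.mem_univ v)
  have hc1 : 1 ≤ c₀ := by
    refine le_trans ?_ (hcle (s ⟨0, hn⟩))
    refine Finset.card_pos.mpr ⟨⟨0, hn⟩, ?_⟩
    simp
  have hn0 : (n : ENNReal) ≠ 0 := by
    simp only [ne_eq, Nat.cast_eq_zero]; omega
  have hnt : (n : ENNReal) ≠ ⊤ := ENNReal.natCast_ne_top n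
  have hc0' : (c₀ : ENNReal) ≠ 0 := by
    simp only [ne_eq, Nat.cast_eq_zero]; omega
  have hct : (c₀ : ENNReal) ≠ ⊤ := ENNReal.natCast_ne_top c₀
  have hsplit : ∀ a : Fin (k + 1) → Fin n × V,
      (atomEvent s (a 0))ᶜ ∩ ⋂ i : Fin k, (atomEvent s (a i.succ))ᶜ
        = ⋂ i : Fin (k + 1), (atomEvent s (a i))ᶜ := by
    intro a
    ext x
    simp only [Set.mem_inter_iff, Set.mem_iInter, Set.mem_compl_iff]
    exact ⟨fun h i => Fin.cases h.1 h.2 i, fun h => ⟨h 0, fun i => h i.succ⟩⟩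
  have heq : ∀ m : ENNReal, m / ((c₀ : ENNReal) / n) = m * n / c₀ := by
    intro m
    rw [div_eq_mul_inv m, ENNReal.inv_div (Or.inl hnt) (Or.inl hn0), ← mul_div_assoc]
  by_cases hne : R.Nonempty
  · have hRfin : R.Finite := by
      refine Set.Finite.subset (Set.finite_range
        (fun b : Fin (k + 1) → Fin n × V => uniformOn (Set.univ : Set (Equiv.Perm (Fin n)))
          (⋂ i : Fin (k + 1), (atomEvent s (b i))ᶜ))) ?_
      rintro r ⟨b, -, rfl⟩
      exact ⟨b, rfl⟩
    obtain ⟨b, hbinj, hbm⟩ := hne.csInf_mem hRfin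
    have hkey : ∃ a : Fin (k + 1) → Fin n × V,
        Function.Injective (fun i => atomEvent s (a i)) ∧ (a 0).2 = vstar ∧
        uniformOn (Set.univ : Set (Equiv.Perm (Fin n)))
          (⋂ i : Fin (k + 1), (atomEvent s (a i))ᶜ) ≤ sInf R := by
      by_cases hcase : ∃ i, ∃ p : Fin n, atomEvent s (b i) = atomEvent s (p, vstar)
      · obtain ⟨i, p, hip⟩ := hcase
        set e := Equiv.swap (0 : Fin (k + 1)) i with he
        set a : Fin (k + 1) → Fin n × V := Function.update (b ∘ e) 0 (p, vstar) with ha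
        have hEa : (fun j => atomEvent s (a j)) = (fun j => atomEvent s (b (e j))) := by
          funext j
          by_cases hj : j = 0
          · subst hj
            rw [ha]
            simp only [Function.update_self]
            rw [he, Equiv.swap_apply_left]
            exact hip.symm
          · rw [ha]
            simp only [Function.update_of_ne hj, Function.comp_apply]
        refine ⟨a, ?_, ?_, ?_⟩
        · rw [hEa]
          exact hbinj.comp e.injective
        · rw [ha]; simp only [Function.update_self]
        · have h3 : ∀ j, atomEvent s (a j) = atomEvent s (b (e j)) := fun j => congrFun hEa j
          have h2 : (⋂ j, (atomEvent s (a j))ᶜ) = ⋂ j, (atomEvent s (b j))ᶜ := by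
            calc (⋂ j, (atomEvent s (a j))ᶜ) = ⋂ j, (atomEvent s (b (e j)))ᶜ :=
                  Set.iInter_congr fun j => by rw [h3]
              _ = ⋂ j, (atomEvent s (b j))ᶜ := iInter_comp_equiv e (fun j => (atomEvent s (b j))ᶜ)
          rw [h2, ← hbm]
      · push_neg at hcase
        have hvne : ∀ i, (b i).2 ≠ vstar := by
          intro i h
          refine hcase i (b i).1 ?_
          rw [← h]
        have hvv : (b 0).2 ≠ vstar := hvne 0
        obtain ⟨σ, hσ1, hσ2⟩ := exists_good_perm s hvv (le_trans (hcle (b 0).2) (le_of_eq hc0))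
        set a : Fin (k + 1) → Fin n × V :=
          fun i => if (b i).2 = (b 0).2 then ((b i).1, vstar) else b i with ha
        have ha0 : a 0 = ((b 0).1, vstar) := by
          rw [ha]; simp
        obtain ⟨x0, hx0mem⟩ := Finset.card_pos.mp
          (lt_of_lt_of_le hc1 (le_of_eq hc0) :
            0 < (Finset.univ.filter (fun x : Fin n => s x = vstar)).card)
        have hx0 : s x0 = vstar := (Finset.mem_filter.mp hx0mem).2
        have hainj : Function.Injective (fun i => atomEvent s (a i)) := by
          intro i j hEq
          simp only at hEq
          by_cases hci : (b i).2 = (b 0).2 <;> by_cases hcj : (b j).2 = (b 0).2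
          · have hai : a i = ((b i).1, vstar) := by rw [ha]; simp only [if_pos hci]
            have haj : a j = ((b j).1, vstar) := by rw [ha]; simp only [if_pos hcj]
            rw [hai, haj] at hEq
            by_cases hpp : (b i).1 = (b j).1
            · apply hbinj
              show atomEvent s (b i) = atomEvent s (b j)
              have hbb : b i = b j := Prod.ext hpp (hci.trans hcj.symm)
              rw [hbb]
            · by_cases hall : ∀ y : Fin n, s y = vstar
              · apply hbinj
                show atomEvent s (b i) = atomEvent s (b j)
                have hempty : ∀ l, (b l).2 = (b 0).2 → atomEvent s (b l) = ∅ := by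
                  intro l hl
                  ext π
                  simp only [atomEvent, Set.mem_setOf_eq, Set.mem_empty_iff_false, iff_false]
                  intro hcc
                  rw [hall (π (b l).1)] at hcc
                  rw [hl] at hcc
                  exact hvv hcc.symm
                rw [hempty i hci, hempty j hcj]
              · push_neg at hall
                obtain ⟨y0, hy0⟩ := hall
                exact absurd hEq (atom_ne s hpp hx0 hy0)
          · exfalso
            have hai : a i = ((b i).1, vstar) := by rw [ha]; simp only [if_pos hci]
            have haj : a j = b j := by rw [ha]; simp only [if_neg hcj]
            rw [hai, haj] at hEq
            exact hcase j (b i).1 hEq.symm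
          · exfalso
            have hai : a i = b i := by rw [ha]; simp only [if_neg hci]
            have haj : a j = ((b j).1, vstar) := by rw [ha]; simp only [if_pos hcj]
            rw [hai, haj] at hEq
            exact hcase i (b j).1 hEq
          · apply hbinj
            show atomEvent s (b i) = atomEvent s (b j)
            have hai : a i = b i := by rw [ha]; simp only [if_neg hci]
            have haj : a j = b j := by rw [ha]; simp only [if_neg hcj]
            rw [hai, haj] at hEq
            exact hEq
        refine ⟨a, hainj, by rw [ha0], ?_⟩
        have hsub2 : (fun π => σ * π) '' (⋂ i, (atomEvent s (a i))ᶜ)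
            ⊆ ⋂ i, (atomEvent s (b i))ᶜ := by
          rintro - ⟨π, hπ, rfl⟩
          rw [Set.mem_iInter] at hπ ⊢
          intro i
          have hπi := hπ i
          simp only [Set.mem_compl_iff, atomEvent, Set.mem_setOf_eq] at hπi ⊢
          rw [Equiv.Perm.mul_apply]
          by_cases hci : (b i).2 = (b 0).2
          · have hai : a i = ((b i).1, vstar) := by rw [ha]; simp only [if_pos hci]
            rw [hai] at hπi
            intro hcc
            rw [hci] at hcc
            exact hπi (hσ1 _ hcc)
          · have hai : a i = b i := by rw [ha]; simp only [if_neg hci]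
            rw [hai] at hπi
            intro hcc
            exact hπi (hσ2 _ _ hci (hvne i) hcc)
        calc uniformOn (Set.univ : Set (Equiv.Perm (Fin n))) (⋂ i, (atomEvent s (a i))ᶜ)
            ≤ uniformOn (Set.univ : Set (Equiv.Perm (Fin n))) (⋂ i, (atomEvent s (b i))ᶜ) := by
              apply uniformOn_perm_mono
              rw [← Set.ncard_image_of_injective (⋂ i, (atomEvent s (a i))ᶜ)
                (mul_right_injective σ)]
              exact Set.ncard_le_ncard hsub2 (Set.toFinite _)
          _ = sInf R := hbm.symm
    obtain ⟨a, hainj, ha0, hale⟩ := hkey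
    have hμa0 : uniformOn (Set.univ : Set (Equiv.Perm (Fin n))) (atomEvent s (a 0))
        = (c₀ : ENNReal) / n := by
      rw [atom_measure s (a 0), ha0, ← hc0]
    have hapos : 0 < uniformOn (Set.univ : Set (Equiv.Perm (Fin n))) (atomEvent s (a 0)) := by
      rw [hμa0]
      exact ENNReal.div_pos hc0' hnt
    have hup : sInf L ≤ sInf R * n / c₀ := by
      have hmem : uniformOn (Set.univ : Set (Equiv.Perm (Fin n)))
            ((atomEvent s (a 0))ᶜ ∩ ⋂ i : Fin k, (atomEvent s (a i.succ))ᶜ)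
          / uniformOn (Set.univ : Set (Equiv.Perm (Fin n))) (atomEvent s (a 0)) ∈ L :=
        ⟨a, hainj, hapos, rfl⟩
      refine le_trans (sInf_le hmem) ?_
      rw [hsplit a, hμa0, ← heq (sInf R)]
      exact ENNReal.div_le_div hale le_rfl
    have hlow : sInf R * n / c₀ ≤ sInf L := by
      refine le_sInf ?_
      rintro r ⟨a', hinj', hpos', rfl⟩
      rw [hsplit a', ← heq (sInf R)]
      refine ENNReal.div_le_div ?_ ?_
      · exact sInf_le ⟨a', hinj', rfl⟩
      · rw [atom_measure s (a' 0)]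
        exact ENNReal.div_le_div (by exact_mod_cast hcle (a' 0).2) le_rfl
    exact le_antisymm hup hlow
  · have hR : R = ∅ := Set.not_nonempty_iff_eq_empty.mp hne
    have hL : L = ∅ := by
      rw [Set.eq_empty_iff_forall_notMem]
      rintro r ⟨a, ha1, -, -⟩
      exact hne ⟨uniformOn (Set.univ : Set (Equiv.Perm (Fin n)))
        (⋂ i : Fin (k + 1), (atomEvent s (a i))ᶜ), a, ha1, rfl⟩
    rw [hL, hR, sInf_empty, ENNReal.top_mul hn0, ENNReal.top_div_of_ne_top hct]
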